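/- Let A be an F-algebra, S a generating set of A, and k ≥ 2 an integer. If w is a k-bounded word in S, then every subword of w is also k-bounded. -/
import Mathlib


namespace P

/-- The list of leaves (letters) of a nonassociative word, in order. -/
def leafList {α : Type*} : FreeMagma α → List α
  | .of a => [a]
  | .mul x y => leafList x ++ leafList y

/-- The length of a nonassociative word: the number of factors. -/
def wlen {α : Type*} (w : FreeMagma α) : ℕ := (leafList w).length

/-- Evaluation of a formal word with letters in a magma `A`. -/
def evalA {A : Type*} [Mul A] (w : FreeMagma A) : A :=
  FreeMagma.lift (id : A → A) w

/-- Evaluation of a formal word in variables `Fin n` under an assignment `v`. -/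
def evalVar {A : Type*} [Mul A] {n : ℕ} (v : Fin n → A) (w : FreeMagma (Fin n)) : A :=
  FreeMagma.lift v w

/-- `w` is a word in the set `S`: all its letters belong to `S`. -/
def HasLeavesIn {A : Type*} (S : Set A) (w : FreeMagma A) : Prop :=
  ∀ a ∈ leafList w, a ∈ S

/-- `L_i(S)`: the span of all values of words in `S` of length at most `i`.
For `i = 0` this is `0`, since every word has length at least 1. -/
def Lspan (F : Type*) {A : Type*} [Field F] [NonUnitalNonAssocRing A] [Module F A]
    (S : Set A) (i : ℕ) : Submodule F A :=
  Submodule.span F { a | ∃ w : FreeMagma A, HasLeavesIn S w ∧ wlen w ≤ i ∧ evalA w = a }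

/-- `S` is a generating set of the algebra `A`. -/
def Generates (F : Type*) {A : Type*} [Field F] [NonUnitalNonAssocRing A] [Module F A]
    (S : Set A) : Prop :=
  Submodule.span F { a | ∃ w : FreeMagma A, HasLeavesIn S w ∧ evalA w = a } = ⊤

/-- The length `l(S)` of a generating set: the least `k` with `L_k(S) = A`. -/
noncomputable def lenS (F : Type*) {A : Type*} [Field F] [NonUnitalNonAssocRing A] [Module F A]
    (S : Set A) : ℕ :=
  sInf { k | Lspan F S k = ⊤ }

/-- The characteristic sequence of a generating set `S`, as a predicate on a
nondecreasing sequence `m : Fin d → ℕ`. -/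
def IsCharSeq (F : Type*) {A : Type*} [Field F] [NonUnitalNonAssocRing A] [Module F A]
    (S : Set A) {d : ℕ} (m : Fin d → ℕ) : Prop :=
  Monotone m ∧ (∀ j, 1 ≤ m j) ∧
    ∀ t : ℕ, 1 ≤ t →
      (Finset.univ.filter fun j => m j = t).card =
        Module.finrank F (Lspan F S t) - Module.finrank F (Lspan F S (t - 1))

/-- `w` is a multilinear word using each variable of `T` exactly once. -/
def IsMultilinearOn {n : ℕ} (T : Finset (Fin n)) (w : FreeMagma (Fin n)) : Prop :=
  (leafList w : Multiset (Fin n)) = T.val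

/-- Membership in `D_0(z_0,…,z_k)`: multilinear words in `z_0,…,z_k` except those of
length `k+1` in which `z_0` is a factor of the last multiplication. -/
def InD0 {k : ℕ} (w : FreeMagma (Fin (k + 1))) : Prop :=
  (leafList w : Multiset (Fin (k + 1))).Nodup ∧
    ¬∃ u : FreeMagma (Fin (k + 1)),
        IsMultilinearOn (Finset.univ.erase 0) u ∧
          (w = FreeMagma.of 0 * u ∨ w = u * FreeMagma.of 0)

/-- Membership in `D_l(z_0,…,z_k)`: multilinear words in `z_0,…,z_k` except those of
length `k+1` in which `z_0` occurs in the first factor of the last multiplication. -/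
def InDl {k : ℕ} (w : FreeMagma (Fin (k + 1))) : Prop :=
  (leafList w : Multiset (Fin (k + 1))).Nodup ∧
    ¬((leafList w : Multiset (Fin (k + 1))) = (Finset.univ : Finset (Fin (k + 1))).val ∧
      ∃ w1 w2 : FreeMagma (Fin (k + 1)), w = w1 * w2 ∧ (0 : Fin (k + 1)) ∈ leafList w1)

/-- Membership in `D_r(z_0,…,z_k)`: multilinear words in `z_0,…,z_k` except those of
length `k+1` in which `z_0` occurs in the second factor of the last multiplication. -/
def InDr {k : ℕ} (w : FreeMagma (Fin (k + 1))) : Prop :=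
  (leafList w : Multiset (Fin (k + 1))).Nodup ∧
    ¬((leafList w : Multiset (Fin (k + 1))) = (Finset.univ : Finset (Fin (k + 1))).val ∧
      ∃ w1 w2 : FreeMagma (Fin (k + 1)), w = w1 * w2 ∧ (0 : Fin (k + 1)) ∈ leafList w2)

/-- The algebra `A` is `k`-mixing. -/
def IsKMixing (F A : Type*) [Field F] [NonUnitalNonAssocRing A] [Module F A] (k : ℕ) : Prop :=
  ∀ (x : A) (y : Fin k → A) (w : FreeMagma (Fin (k + 1))),
    (∃ u, IsMultilinearOn (Finset.univ.erase 0) u ∧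
        (w = FreeMagma.of 0 * u ∨ w = u * FreeMagma.of 0)) →
      evalVar (Fin.cons x y) w ∈
        Submodule.span F
          { a | ∃ z : FreeMagma (Fin (k + 1)), InD0 z ∧ evalVar (Fin.cons x y) z = a }

/-- The algebra `A` is `k`-sliding. -/
def IsKSliding (F A : Type*) [Field F] [NonUnitalNonAssocRing A] [Module F A] (k : ℕ) : Prop :=
  (∀ (x : A) (y : Fin k → A) (u : FreeMagma (Fin (k + 1))),
      IsMultilinearOn (Finset.univ.erase 0) u →
        evalVar (Fin.cons x y) (u * FreeMagma.of 0) ∈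
          Submodule.span F
            { a | ∃ z : FreeMagma (Fin (k + 1)), InDl z ∧ evalVar (Fin.cons x y) z = a }) ∨
  (∀ (x : A) (y : Fin k → A) (u : FreeMagma (Fin (k + 1))),
      IsMultilinearOn (Finset.univ.erase 0) u →
        evalVar (Fin.cons x y) (FreeMagma.of 0 * u) ∈
          Submodule.span F
            { a | ∃ z : FreeMagma (Fin (k + 1)), InDr z ∧ evalVar (Fin.cons x y) z = a })

/-- `u` is a subword of `w`. -/
inductive IsSubword {A : Type*} : FreeMagma A → FreeMagma A → Prop
  | refl (w : FreeMagma A) : IsSubword w w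
  | left {s u : FreeMagma A} (v : FreeMagma A) : IsSubword s u → IsSubword s (u * v)
  | right (u : FreeMagma A) {s v : FreeMagma A} : IsSubword s v → IsSubword s (u * v)

/-- `IsSprout w L`: `L` is a sprout sequence of the word `w` (with the convention that
words of length 1 have the empty sprout sequence). -/
inductive IsSprout {A : Type*} : FreeMagma A → List (FreeMagma A) → Prop
  | single (a : A) : IsSprout (FreeMagma.of a) []
  | cons_l {u v : FreeMagma A} {L : List (FreeMagma A)} :
      wlen u ≤ wlen v → IsSprout v L → IsSprout (u * v) (u :: L)
  | cons_r {u v : FreeMagma A} {L : List (FreeMagma A)} :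
      wlen v ≤ wlen u → IsSprout u L → IsSprout (u * v) (v :: L)

/-- A word is `k`-bounded if it has length 1 or admits an `l`-sprout sequence all of whose
terms are strictly less than `k`. -/
def KBounded {A : Type*} (k : ℕ) (w : FreeMagma A) : Prop :=
  ∃ L : List (FreeMagma A), IsSprout w L ∧ ∀ u ∈ L, wlen u < k

/-- A word `w` in `S` is irreducible if it does not lie in `L_m(S)` for any `m < l(w)`. -/
def Irred (F : Type*) {A : Type*} [Field F] [NonUnitalNonAssocRing A] [Module F A]
    (S : Set A) (w : FreeMagma A) : Prop :=
  ∀ m : ℕ, m < wlen w → evalA w ∉ Lspan F S m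

/-- The step function of a word: the least `t` such that `w` has a subword of
length `l(w) - 2t - 1`. -/
noncomputable def stepFn {A : Type*} (w : FreeMagma A) : ℕ :=
  sInf { t : ℕ | ∃ u : FreeMagma A, IsSubword u w ∧ wlen u + 2 * t + 1 = wlen w }

/-- `w` is a `p`-step word for the generating set `S`. -/
def IsPStepWord (F : Type*) {A : Type*} [Field F] [NonUnitalNonAssocRing A] [Module F A]
    (S : Set A) (w : FreeMagma A) (p : ℕ) : Prop :=
  HasLeavesIn S w ∧ Irred F S w ∧ KBounded 3 w ∧ stepFn w = p ∧
    ∀ v : FreeMagma A, HasLeavesIn S v → Irred F S v → KBounded 3 v → wlen v = wlen w →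
      p ≤ stepFn v

/-- `A` is `k`-round: `x · v = 0` for every product `v` of `k` elements. -/
def IsKRound (A : Type*) [NonUnitalNonAssocRing A] (k : ℕ) : Prop :=
  ∀ (x : A) (w : FreeMagma A), wlen w = k → x * evalA w = 0

/-- `A` is `k`-based. -/
def IsKBased (A : Type*) [NonUnitalNonAssocRing A] (k : ℕ) : Prop :=
  ∀ (x : A) (u v : FreeMagma A), wlen u + wlen v = k →
    x * (evalA u * evalA v) = evalA u * (x * evalA v) ∧
      (evalA u * evalA v) * x = (evalA u * x) * evalA v

/-- The set `P(x,y,z)`. -/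
def Pset {A : Type*} [Mul A] (x y z : A) : Set A :=
  {(x*z)*y, (z*x)*y, (y*z)*x, (z*y)*x, x*(z*y), x*(y*z), y*(x*z), y*(z*x),
    x*y, y*x, x*z, z*x, y*z, z*y, x, y, z}

/-- The set `Q_l(x,y,z)`. -/
def Qlset {A : Type*} [Mul A] (x y z : A) : Set A :=
  {x*(z*y), x*(y*z), y*(x*z), y*(z*x), x*y, y*x, x*z, z*x, y*z, z*y, x, y, z}

/-- The set `Q_r(x,y,z)`. -/
def Qrset {A : Type*} [Mul A] (x y z : A) : Set A :=
  {(x*z)*y, (z*x)*y, (y*z)*x, (z*y)*x, x*y, y*x, x*z, z*x, y*z, z*y, x, y, z}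

/-- `A` is a mixing algebra. -/
def IsMixingAlg (F A : Type*) [Field F] [NonUnitalNonAssocRing A] [Module F A] : Prop :=
  ∀ x y z : A, (x*y)*z ∈ Submodule.span F (Pset x y z) ∧
    z*(x*y) ∈ Submodule.span F (Pset x y z)

/-- `A` is a sliding algebra. -/
def IsSlidingAlg (F A : Type*) [Field F] [NonUnitalNonAssocRing A] [Module F A] : Prop :=
  (∀ x y z : A, z*(x*y) ∈ Submodule.span F (Qrset x y z)) ∨
  (∀ x y z : A, (x*y)*z ∈ Submodule.span F (Qlset x y z))


theorem wlen_mul' {α : Type*} (u v : FreeMagma α) : wlen (u * v) = wlen u + wlen v := by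
  show (leafList (FreeMagma.mul u v)).length = _
  simp [leafList, wlen]

theorem wlen_pos' {α : Type*} (w : FreeMagma α) : 1 ≤ wlen w := by
  induction w with
  | ih1 a => simp [wlen, leafList]
  | ih2 u v ihu ihv =>
    rw [wlen_mul']; omega

theorem subword_wlen' {α : Type*} {s w : FreeMagma α} (h : IsSubword s w) :
    wlen s ≤ wlen w := by
  induction h with
  | refl => exact le_rfl
  | left v _ ih => rw [wlen_mul']; omega
  | right u _ ih => rw [wlen_mul']; have := wlen_pos' u; omega

theorem exists_sprout' {α : Type*} (w : FreeMagma α) :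
    ∃ L : List (FreeMagma α), IsSprout w L ∧ ∀ u ∈ L, wlen u < wlen w := by
  induction w with
  | ih1 a => exact ⟨[], IsSprout.single a, by simp⟩
  | ih2 u v ihu ihv =>
    have hu := wlen_pos' u
    have hv := wlen_pos' v
    rcases le_total (wlen u) (wlen v) with h | h
    · obtain ⟨L, hL, hlt⟩ := ihv
      refine ⟨u :: L, IsSprout.cons_l h hL, ?_⟩
      intro s hs
      rcases List.mem_cons.mp hs with h' | hs
      · subst h'; rw [wlen_mul']; omega
      · have := hlt s hs; rw [wlen_mul']; omega
    · obtain ⟨L, hL, hlt⟩ := ihu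
      refine ⟨v :: L, IsSprout.cons_r h hL, ?_⟩
      intro s hs
      rcases List.mem_cons.mp hs with h' | hs
      · subst h'; rw [wlen_mul']; omega
      · have := hlt s hs; rw [wlen_mul']; omega

theorem kbounded_of_small' {α : Type*} {k : ℕ} {w : FreeMagma α} (h : wlen w ≤ k) :
    KBounded k w := by
  obtain ⟨L, hL, hlt⟩ := exists_sprout' w
  exact ⟨L, hL, fun u hu => lt_of_lt_of_le (hlt u hu) h⟩

theorem kbounded_subword' {α : Type*} {k : ℕ} {w : FreeMagma α} (hb : KBounded k w) :
    ∀ u : FreeMagma α, IsSubword u w → KBounded k u := by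
  induction w with
  | ih1 a =>
    intro s hs
    cases hs
    exact hb
  | ih2 u v ihu ihv =>
    obtain ⟨L, hL, hlt⟩ := hb
    intro s hs
    rcases hs with _ | ⟨_, hs⟩ | ⟨_, hs⟩
    · exact ⟨L, hL, hlt⟩
    · -- s subword of u
      cases hL with
      | cons_l h hL' =>
        have : wlen u < k := hlt u (by simp)
        exact kbounded_of_small' (le_of_lt (lt_of_le_of_lt (subword_wlen' hs) this))
      | cons_r h hL' =>
        exact ihu ⟨_, hL', fun x hx => hlt x (by simp [hx])⟩ s hs
    · -- s subword of v
      cases hL with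
      | cons_l h hL' =>
        exact ihv ⟨_, hL', fun x hx => hlt x (by simp [hx])⟩ s hs
      | cons_r h hL' =>
        have : wlen v < k := hlt v (by simp)
        exact kbounded_of_small' (le_of_lt (lt_of_le_of_lt (subword_wlen' hs) this))

section Statement
variable {F A : Type*} [Field F] [NonUnitalNonAssocRing A] [Module F A]
  [SMulCommClass F A A] [IsScalarTower F A A]

/- STATEMENT 14 -/
theorem stmt14 (k : ℕ) (hk : 2 ≤ k) (S : Set A) (hS : Generates F S)
    (w : FreeMagma A) (hw : HasLeavesIn S w) (hb : KBounded k w) :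
    ∀ u : FreeMagma A, IsSubword u w → KBounded k u :=
  kbounded_subword' hb

end Statement

end P
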